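/- Under the standing hypotheses, assume in addition 0 < η < e^{σ}, e^{σ} + η < 1, and σ + u > 0. Then for every x ∈ ℝ³ with |P_L x| = 1 and 0 < x₃ < 1 there exists t > 0 such that 0 < G₃(s,x) < 1 for all s ∈ [0,t) and G₃(t,x) = 1. -/

import Mathlib

/-!
On `B₁` the maps `G t`, `t ∈ [0, 1]`, are `η`-close to `T(t)` in `C¹`. Applying the mean value
inequality along the segments from `P_L y` and from `P_U y` to `y`, and using that `G t` keeps
`P_L y ∈ L` in `L` and `P_U y ∈ U` in `U`, gives for `y ∈ B₁`
`|G(t, y)₃ - e^{ut} y₃| ≤ η |y₃|` and `|P_L G(t, y)| ≤ (e^{σt} + η) |P_L y|`.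
Since `e^σ + η ≤ 1`, as long as the third coordinate stays `≤ 1` the orbit at integer times stays
in `B₁` and its third coordinate grows at least like `(e^u - η)ⁿ`, with `e^u - η > 1`.
So the level `1` is crossed, and its first hitting time is the required `t`; before it the third
coordinate stays positive because `e^{ut} - η > 0`.
-/

noncomputable section
open Real Set

abbrev R3 := EuclideanSpace ℝ (Fin 3)

/-- Orthogonal projection onto `L = ℝe₁ ⊕ ℝe₂`. -/
def PL (x : R3) : R3 := WithLp.toLp 2 (fun i => if (i : ℕ) = 2 then 0 else x i)

/-- Orthogonal projection onto `U = ℝe₃`. -/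
def PU (x : R3) : R3 := WithLp.toLp 2 (fun i => if (i : ℕ) = 2 then x i else 0)

/-- The plane `L = ℝe₁ ⊕ ℝe₂`. -/
def Lset : Set R3 := {x | x 2 = 0}

/-- The line `U = ℝe₃`. -/
def Uset : Set R3 := {x | x 0 = 0 ∧ x 1 = 0}

/-- `B₁ = {x : |P_L x| ≤ 1, |P_U x| ≤ 1}`. -/
def B1 : Set R3 := {x | ‖PL x‖ ≤ 1 ∧ ‖PU x‖ ≤ 1}

/-- The linearized flow `T(t)`. -/
def Tmap (σ μ u t : ℝ) (x : R3) : R3 := WithLp.toLp 2 (fun i =>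
  if (i : ℕ) = 0 then exp (σ * t) * (cos (μ * t) * x 0 + sin (μ * t) * x 1)
  else if (i : ℕ) = 1 then exp (σ * t) * (-(sin (μ * t)) * x 0 + cos (μ * t) * x 1)
  else exp (u * t) * x 2)

/-- A C¹ flow on ℝ³. -/
def IsC1Flow (G : ℝ → R3 → R3) : Prop :=
  ContDiff ℝ 1 (fun p : ℝ × R3 => G p.1 p.2) ∧ (∀ x, G 0 x = x) ∧
    ∀ s t x, G (t + s) x = G t (G s x)

/-- `M` is invariant under the flow `G` in the set `N`. -/
def InvariantIn (G : ℝ → R3 → R3) (M N : Set R3) : Prop :=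
  ∀ x ∈ M ∩ N, ∀ I : Set ℝ, (0 : ℝ) ∈ I → I.OrdConnected →
    (∀ t ∈ I, G t x ∈ N) → ∀ t ∈ I, G t x ∈ M

open Metric

lemma R3.norm_eq (v : R3) : ‖v‖ = √(v 0 ^ 2 + v 1 ^ 2 + v 2 ^ 2) := by
  simp [EuclideanSpace.norm_eq, Fin.sum_univ_three]

@[simp] lemma PL_apply_zero (v : R3) : PL v 0 = v 0 := by simp [PL]
@[simp] lemma PL_apply_one (v : R3) : PL v 1 = v 1 := by simp [PL]
@[simp] lemma PL_apply_two (v : R3) : PL v 2 = 0 := by simp [PL]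
@[simp] lemma PU_apply_zero (v : R3) : PU v 0 = 0 := by simp [PU]
@[simp] lemma PU_apply_one (v : R3) : PU v 1 = 0 := by simp [PU]
@[simp] lemma PU_apply_two (v : R3) : PU v 2 = v 2 := by simp [PU]

lemma norm_PL (v : R3) : ‖PL v‖ = √(v 0 ^ 2 + v 1 ^ 2) := by
  simp [R3.norm_eq]

lemma norm_PU (v : R3) : ‖PU v‖ = |v 2| := by
  simp [R3.norm_eq, Real.sqrt_sq_eq_abs]

lemma norm_PL_le_norm (v : R3) : ‖PL v‖ ≤ ‖v‖ := by
  rw [norm_PL, R3.norm_eq]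
  exact Real.sqrt_le_sqrt (le_add_of_nonneg_right (sq_nonneg _))

lemma PL_add_PU (v : R3) : PL v + PU v = v := by
  ext i; fin_cases i <;> simp

lemma PU_add_PL (v : R3) : PU v + PL v = v := by
  rw [add_comm, PL_add_PU]

lemma PL_sub (a b : R3) : PL (a - b) = PL a - PL b := by
  ext i; fin_cases i <;> simp

lemma PL_eq_zero_of_mem_Uset {v : R3} (hv : v ∈ Uset) : PL v = 0 := by
  ext i; fin_cases i <;> simp [hv.1, hv.2]

lemma PL_mem_Lset (v : R3) : PL v ∈ Lset := PL_apply_two v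

lemma PU_mem_Uset (v : R3) : PU v ∈ Uset := ⟨PU_apply_zero v, PU_apply_one v⟩

lemma smul_PL_add_smul_PU_mem_B1 {y : R3} (hy : y ∈ B1) {a b : ℝ} (ha : a ∈ Icc (0 : ℝ) 1)
    (hb : b ∈ Icc (0 : ℝ) 1) : a • PL y + b • PU y ∈ B1 := by
  have hPL : PL (a • PL y + b • PU y) = a • PL y := by ext i; fin_cases i <;> simp
  have hPU : PU (a • PL y + b • PU y) = b • PU y := by ext i; fin_cases i <;> simp
  have hunit {c : ℝ} (hc : c ∈ Icc (0 : ℝ) 1) : ‖c‖ ≤ 1 := by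
    rw [Real.norm_eq_abs, abs_of_nonneg hc.1]; exact hc.2
  constructor
  · rw [hPL, norm_smul]; exact mul_le_one₀ (hunit ha) (norm_nonneg _) hy.1
  · rw [hPU, norm_smul]; exact mul_le_one₀ (hunit hb) (norm_nonneg _) hy.2

lemma PL_mem_B1 {y : R3} (hy : y ∈ B1) : PL y ∈ B1 := by
  simpa using
    smul_PL_add_smul_PU_mem_B1 hy (right_mem_Icc.2 zero_le_one) (left_mem_Icc.2 zero_le_one)

lemma PU_mem_B1 {y : R3} (hy : y ∈ B1) : PU y ∈ B1 := by
  simpa using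
    smul_PL_add_smul_PU_mem_B1 hy (left_mem_Icc.2 zero_le_one) (right_mem_Icc.2 zero_le_one)

section Tmap

variable (σ μ u t : ℝ) (y : R3)

@[simp] lemma Tmap_apply_zero :
    Tmap σ μ u t y 0 = exp (σ * t) * (cos (μ * t) * y 0 + sin (μ * t) * y 1) := by
  simp [Tmap]

@[simp] lemma Tmap_apply_one :
    Tmap σ μ u t y 1 = exp (σ * t) * (-sin (μ * t) * y 0 + cos (μ * t) * y 1) := by
  simp [Tmap]

@[simp] lemma Tmap_apply_two : Tmap σ μ u t y 2 = exp (u * t) * y 2 := by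
  simp [Tmap]

lemma PL_Tmap_PL : PL (Tmap σ μ u t (PL y)) = Tmap σ μ u t (PL y) := by
  ext i; fin_cases i <;> simp

lemma norm_Tmap_PL : ‖Tmap σ μ u t (PL y)‖ = exp (σ * t) * ‖PL y‖ := by
  rw [R3.norm_eq, norm_PL, ← Real.sqrt_sq (exp_pos (σ * t)).le, ← Real.sqrt_mul (sq_nonneg _)]
  congr 1
  simp only [Tmap_apply_zero, Tmap_apply_one, Tmap_apply_two, PL_apply_zero, PL_apply_one,
    PL_apply_two]
  linear_combination exp (σ * t) ^ 2 * (y 0 ^ 2 + y 1 ^ 2) * sin_sq_add_cos_sq (μ * t)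

end Tmap

theorem norm_image_add_sub_sub_le_of_norm_fderiv_sub_le {E F : Type*} [NormedAddCommGroup E]
    [NormedSpace ℝ E] [NormedAddCommGroup F] [NormedSpace ℝ F] {f : E → F}
    (hf : Differentiable ℝ f) {a v : E} {w : F} {C : ℝ}
    (hC : ∀ s ∈ Ico (0 : ℝ) 1, ‖fderiv ℝ f (a + s • v) v - w‖ ≤ C) :
    ‖f (a + v) - f a - w‖ ≤ C := by
  have hderiv : ∀ s ∈ Icc (0 : ℝ) 1, HasDerivWithinAt (fun s : ℝ => f (a + s • v) - s • w)
      (fderiv ℝ f (a + s • v) v - w) (Icc (0 : ℝ) 1) s := by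
    intro s _
    have hline : HasDerivAt (fun s : ℝ => a + s • v) v s := by
      simpa using ((hasDerivAt_id s).smul_const v).const_add a
    have hw : HasDerivAt (fun s : ℝ => s • w) w s := by
      simpa using (hasDerivAt_id s).smul_const w
    exact (((hf _).hasFDerivAt.comp_hasDerivAt s hline).sub hw).hasDerivWithinAt
  simpa [sub_right_comm] using norm_image_sub_le_of_norm_deriv_le_segment_01' hderiv hC

lemma IsC1Flow.differentiable {G : ℝ → R3 → R3} (hG : IsC1Flow G) (t : ℝ) :
    Differentiable ℝ (G t) := fun x =>
  (hG.1.differentiable one_ne_zero (t, x)).comp x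
    ((differentiableAt_const t).prodMk differentiableAt_id)

lemma IsC1Flow.continuous_orbit_apply {G : ℝ → R3 → R3} (hG : IsC1Flow G) (x : R3) (i : Fin 3) :
    Continuous fun t => G t x i :=
  (PiLp.continuous_apply 2 _ i).comp (hG.1.continuous.comp (continuous_id.prodMk continuous_const))

theorem Continuous.exists_first_hitting_time {f : ℝ → ℝ} (hf : Continuous f) {c T : ℝ}
    (h0 : f 0 < c) (hT0 : 0 ≤ T) (hT : c ≤ f T) :
    ∃ t > 0, (∀ s ∈ Ico 0 t, f s < c) ∧ f t = c := by
  obtain ⟨t, ⟨⟨ht0, htT⟩, hct⟩, hleast⟩ :=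
    (isCompact_Icc.inter_right (isClosed_le continuous_const hf)).exists_isLeast
      (⟨T, ⟨hT0, le_rfl⟩, hT⟩ : (Icc 0 T ∩ {t | c ≤ f t}).Nonempty)
  have hbelow : ∀ s ∈ Ico 0 t, f s < c := fun s hs =>
    lt_of_not_ge fun hcs => hs.2.not_ge (hleast ⟨⟨hs.1, hs.2.le.trans htT⟩, hcs⟩)
  have htpos : 0 < t := ht0.lt_of_ne (by rintro rfl; exact h0.not_ge hct)
  obtain ⟨s, hs, hfs⟩ := intermediate_value_Icc ht0 hf.continuousOn ⟨h0.le, hct⟩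
  have hst : s = t := hs.2.eq_of_not_lt fun hst => (hbelow s ⟨hs.1, hst⟩).ne hfs
  exact ⟨t, htpos, hbelow, hst ▸ hfs⟩

/-- The standing hypotheses, with `B = closedBall 0 rB`. -/
structure IsNearLinearFlow (G : ℝ → R3 → R3) (σ μ u η rB : ℝ) : Prop where
  isC1Flow : IsC1Flow G
  B1_subset : B1 ⊆ closedBall 0 rB
  fderiv_near : ∀ t ∈ Icc (0 : ℝ) 1, ∀ x ∈ B1, ∀ y : R3,
    ‖fderiv ℝ (G t) x y - Tmap σ μ u t y‖ ≤ η * ‖y‖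
  mapsTo : ∀ t ∈ Icc (0 : ℝ) 1, ∀ x ∈ B1, G t x ∈ closedBall 0 rB
  invariant_L : InvariantIn G Lset (closedBall 0 rB)
  invariant_U : InvariantIn G Uset (closedBall 0 rB)

namespace IsNearLinearFlow

variable {G : ℝ → R3 → R3} {σ μ u η rB t : ℝ}

lemma flow_mem_Lset (h : IsNearLinearFlow G σ μ u η rB) {z : R3} (hz : z ∈ Lset) (hzB : z ∈ B1)
    (ht : t ∈ Icc (0 : ℝ) 1) : G t z ∈ Lset :=
  h.invariant_L z ⟨hz, h.B1_subset hzB⟩ _ (left_mem_Icc.2 zero_le_one) ordConnected_Icc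
    (fun s hs => h.mapsTo s hs z hzB) t ht

lemma flow_mem_Uset (h : IsNearLinearFlow G σ μ u η rB) {z : R3} (hz : z ∈ Uset) (hzB : z ∈ B1)
    (ht : t ∈ Icc (0 : ℝ) 1) : G t z ∈ Uset :=
  h.invariant_U z ⟨hz, h.B1_subset hzB⟩ _ (left_mem_Icc.2 zero_le_one) ordConnected_Icc
    (fun s hs => h.mapsTo s hs z hzB) t ht

lemma norm_flow_add_sub_sub_Tmap_le (h : IsNearLinearFlow G σ μ u η rB)
    (ht : t ∈ Icc (0 : ℝ) 1) {a v : R3} (hseg : ∀ s ∈ Icc (0 : ℝ) 1, a + s • v ∈ B1) :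
    ‖G t (a + v) - G t a - Tmap σ μ u t v‖ ≤ η * ‖v‖ :=
  norm_image_add_sub_sub_le_of_norm_fderiv_sub_le (h.isC1Flow.differentiable t) fun s hs =>
    h.fderiv_near t ht _ (hseg s (Ico_subset_Icc_self hs)) v

lemma abs_flow_apply_two_sub_le (h : IsNearLinearFlow G σ μ u η rB) (ht : t ∈ Icc (0 : ℝ) 1)
    {y : R3} (hy : y ∈ B1) : |G t y 2 - exp (u * t) * y 2| ≤ η * |y 2| := by
  have hkey := h.norm_flow_add_sub_sub_Tmap_le ht (a := PL y) (v := PU y) fun s hs => by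
    simpa using smul_PL_add_smul_PU_mem_B1 hy (right_mem_Icc.2 zero_le_one) hs
  rw [PL_add_PU, norm_PU] at hkey
  have hL : G t (PL y) 2 = 0 := h.flow_mem_Lset (PL_mem_Lset y) (PL_mem_B1 hy) ht
  calc |G t y 2 - exp (u * t) * y 2|
      = ‖(G t y - G t (PL y) - Tmap σ μ u t (PU y)) 2‖ := by
        simp [hL, Real.norm_eq_abs]
    _ ≤ η * |y 2| := (PiLp.norm_apply_le _ _).trans hkey

lemma norm_PL_flow_le (h : IsNearLinearFlow G σ μ u η rB) (ht : t ∈ Icc (0 : ℝ) 1)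
    {y : R3} (hy : y ∈ B1) : ‖PL (G t y)‖ ≤ (exp (σ * t) + η) * ‖PL y‖ := by
  set w := Tmap σ μ u t (PL y)
  have hkey := h.norm_flow_add_sub_sub_Tmap_le ht (a := PU y) (v := PL y) fun s hs => by
    simpa [add_comm] using smul_PL_add_smul_PU_mem_B1 hy hs (right_mem_Icc.2 zero_le_one)
  rw [PU_add_PL] at hkey
  have hU : PL (G t (PU y)) = 0 :=
    PL_eq_zero_of_mem_Uset (h.flow_mem_Uset (PU_mem_Uset y) (PU_mem_B1 hy) ht)
  have hsplit : PL (G t y) - w = PL (G t y - G t (PU y) - w) := by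
    rw [PL_sub, PL_sub, hU, PL_Tmap_PL, sub_zero]
  calc ‖PL (G t y)‖ ≤ ‖w‖ + ‖PL (G t y) - w‖ := norm_le_norm_add_norm_sub' _ _
    _ ≤ exp (σ * t) * ‖PL y‖ + η * ‖PL y‖ := by
        rw [norm_Tmap_PL, hsplit]
        gcongr
        exact (norm_PL_le_norm _).trans hkey
    _ = (exp (σ * t) + η) * ‖PL y‖ := by ring

lemma flow_one_mem_B1_and_le (h : IsNearLinearFlow G σ μ u η rB) (hση : exp σ + η ≤ 1)
    (hηu : η ≤ exp u) {y : R3} (hy : y ∈ B1) (hy2 : 0 ≤ y 2) (hle : G 1 y 2 ≤ 1) :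
    G 1 y ∈ B1 ∧ (exp u - η) * y 2 ≤ G 1 y 2 := by
  have h01 : (1 : ℝ) ∈ Icc (0 : ℝ) 1 := right_mem_Icc.2 zero_le_one
  have hlow : (exp u - η) * y 2 ≤ G 1 y 2 := by
    have := abs_le.1 (h.abs_flow_apply_two_sub_le h01 hy)
    rw [abs_of_nonneg hy2, mul_one] at this
    linarith [this.1]
  have hPL : ‖PL (G 1 y)‖ ≤ 1 :=
    calc ‖PL (G 1 y)‖ ≤ (exp σ + η) * ‖PL y‖ := by simpa using h.norm_PL_flow_le h01 hy
      _ ≤ 1 := mul_le_one₀ hση (norm_nonneg _) hy.1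
  have hPU : ‖PU (G 1 y)‖ ≤ 1 := by
    rw [norm_PU, abs_le]
    exact ⟨by nlinarith [mul_nonneg (sub_nonneg.2 hηu) hy2], hle⟩
  exact ⟨⟨hPL, hPU⟩, hlow⟩

lemma orbit_nat_mem_B1_and_pow_mul_le (h : IsNearLinearFlow G σ μ u η rB)
    (hση : exp σ + η ≤ 1) (hηu : η ≤ exp u) {x : R3} (hx : x ∈ B1) (hx2 : 0 ≤ x 2) (n : ℕ)
    (hle : ∀ k ≤ n, G k x 2 ≤ 1) : G n x ∈ B1 ∧ (exp u - η) ^ n * x 2 ≤ G n x 2 := by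
  induction n with
  | zero => simpa [h.isC1Flow.2.1] using hx
  | succ n ih =>
    obtain ⟨hyB, hyle⟩ := ih fun k hk => hle k (hk.trans n.le_succ)
    have hflow : G (n + 1 : ℕ) x = G 1 (G n x) := by
      rw [Nat.cast_succ, add_comm, h.isC1Flow.2.2]
    have hrate : 0 ≤ exp u - η := sub_nonneg.2 hηu
    obtain ⟨hB, hstep⟩ := h.flow_one_mem_B1_and_le hση hηu hyB
      ((mul_nonneg (pow_nonneg hrate n) hx2).trans hyle) (hflow ▸ hle (n + 1) le_rfl)
    refine hflow ▸ ⟨hB, ?_⟩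
    calc (exp u - η) ^ (n + 1) * x 2 = (exp u - η) * ((exp u - η) ^ n * x 2) := by ring
      _ ≤ (exp u - η) * G n x 2 := mul_le_mul_of_nonneg_left hyle hrate
      _ ≤ G 1 (G n x) 2 := hstep

lemma exists_nat_one_lt_orbit_apply_two (h : IsNearLinearFlow G σ μ u η rB)
    (hση : exp σ + η ≤ 1) (hrate : 1 < exp u - η) {x : R3} (hx : x ∈ B1) (hx2 : 0 < x 2) :
    ∃ N : ℕ, 1 < G N x 2 := by
  by_contra! hle
  obtain ⟨n, hn⟩ := pow_unbounded_of_one_lt (1 / x 2) hrate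
  have hgrow := (h.orbit_nat_mem_B1_and_pow_mul_le hση (by linarith) hx hx2.le n
    fun k _ => hle k).2
  rw [div_lt_iff₀ hx2] at hn
  linarith [hle n]

lemma orbit_apply_two_pos (h : IsNearLinearFlow G σ μ u η rB) (hση : exp σ + η ≤ 1)
    (hu : 0 ≤ u) (hη : η < 1) {x : R3} (hx : x ∈ B1) (hx2 : 0 < x 2) {s : ℝ} (hs : 0 ≤ s)
    (hle : ∀ k : ℕ, (k : ℝ) ≤ s → G k x 2 ≤ 1) : 0 < G s x 2 := by
  have hrate : 0 < exp u - η := by linarith [one_le_exp hu]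
  set n := ⌊s⌋₊
  obtain ⟨hyB, hyle⟩ := h.orbit_nat_mem_B1_and_pow_mul_le hση (sub_nonneg.1 hrate.le) hx hx2.le n
    fun k hk => hle k ((Nat.cast_le.2 hk).trans (Nat.floor_le hs))
  have hy2 : 0 < G n x 2 := (mul_pos (pow_pos hrate n) hx2).trans_le hyle
  have hr : s - n ∈ Icc (0 : ℝ) 1 :=
    ⟨sub_nonneg.2 (Nat.floor_le hs), by linarith [Nat.lt_floor_add_one s]⟩
  have hflow : G s x = G (s - n) (G n x) := by rw [← h.isC1Flow.2.2, sub_add_cancel]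
  have hvert := abs_le.1 (h.abs_flow_apply_two_sub_le hr hyB)
  rw [abs_of_pos hy2] at hvert
  rw [hflow]
  nlinarith [one_le_exp (mul_nonneg hu hr.1)]

end IsNearLinearFlow

theorem statement10_general
    (u σ μ η rB : ℝ) (hu : 0 < u)
    (hB1B : B1 ⊆ Metric.closedBall (0 : R3) rB)
    (G : ℝ → R3 → R3) (hG : IsC1Flow G)
    (hD2 : ∀ t ∈ Icc (0:ℝ) 1, ∀ x ∈ B1, ∀ y : R3,
      ‖fderiv ℝ (G t) x y - Tmap σ μ u t y‖ ≤ η * ‖y‖)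
    (hGB : ∀ t ∈ Icc (0:ℝ) 1, ∀ x ∈ B1, G t x ∈ Metric.closedBall (0 : R3) rB)
    (hLinv : InvariantIn G Lset (Metric.closedBall 0 rB))
    (hUinv : InvariantIn G Uset (Metric.closedBall 0 rB))
    (hησ1 : exp σ + η < 1) (hσu : 0 < σ + u) :
    ∀ x : R3, ‖PL x‖ = 1 → 0 < x 2 → x 2 < 1 →
      ∃ t > 0, (∀ s ∈ Ico (0 : ℝ) t, 0 < G s x 2 ∧ G s x 2 < 1) ∧ G t x 2 = 1 := by
  intro x hPLx hx0 hx1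
  have h : IsNearLinearFlow G σ μ u η rB := ⟨hG, hB1B, hD2, hGB, hLinv, hUinv⟩
  have hx : x ∈ B1 := ⟨hPLx.le, by rw [norm_PU, abs_of_pos hx0]; exact hx1.le⟩
  have hη : η < 1 := by linarith [exp_pos σ]
  -- `η < 1 - e^σ ≤ -σ < u ≤ e^u - 1`
  have hrate : 1 < exp u - η := by linarith [add_one_le_exp u, add_one_le_exp σ]
  obtain ⟨N, hN⟩ := h.exists_nat_one_lt_orbit_apply_two hησ1.le hrate hx hx0
  obtain ⟨t, ht, hbelow, hhit⟩ := (hG.continuous_orbit_apply x 2).exists_first_hitting_time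
    (by simpa [hG.2.1] using hx1) N.cast_nonneg hN.le
  refine ⟨t, ht, fun s hs => ⟨?_, hbelow s hs⟩, hhit⟩
  exact h.orbit_apply_two_pos hησ1.le hu.le hη hx hx0 hs.1 fun k hk =>
    (hbelow k ⟨k.cast_nonneg, hk.trans_lt hs.2⟩).le

theorem statement10
    (u σ μ η rB : ℝ) (hu : 0 < u) (hσ : σ < 0) (hμ : 0 < μ) (hη : 0 < η)
    (hB1B : B1 ⊆ Metric.closedBall (0 : R3) rB)
    (G : ℝ → R3 → R3) (hG : IsC1Flow G) (hG0 : ∀ t : ℝ, G t 0 = 0)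
    (hD2 : ∀ t ∈ Icc (0:ℝ) 1, ∀ x ∈ B1, ∀ y : R3,
      ‖fderiv ℝ (G t) x y - Tmap σ μ u t y‖ ≤ η * ‖y‖)
    (hGB : ∀ t ∈ Icc (0:ℝ) 1, ∀ x ∈ B1, G t x ∈ Metric.closedBall (0 : R3) rB)
    (hLinv : InvariantIn G Lset (Metric.closedBall 0 rB))
    (hUinv : InvariantIn G Uset (Metric.closedBall 0 rB))
    (hησ : η < exp σ) (hησ1 : exp σ + η < 1) (hσu : 0 < σ + u) :
    ∀ x : R3, ‖PL x‖ = 1 → 0 < x 2 → x 2 < 1 →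
      ∃ t > 0, (∀ s ∈ Ico (0 : ℝ) t, 0 < G s x 2 ∧ G s x 2 < 1) ∧ G t x 2 = 1 :=
  statement10_general u σ μ η rB hu hB1B G hG hD2 hGB hLinv hUinv hησ1 hσu
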